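/- Assume regularity. Fix a prompt vector π ∈ [0,1]^{|H|} and define the modified sequence X̂ of length T+2 accordingly. Then there exists an invertible diagonal matrix D ∈ ℝ^{|H|×|H|} such that for every x ∈ X^T with P(X̂_1 = z̃, X̂_{3:T+2} = x) > 0, there is a scalar r_x > 0 with P(H_2 | X̂_1 = z̃, X̂_{3:T+2} = x) = r_x · D · (P(X̂_1 = z̃, H_2) ⊙ P(H_0 | X_{1:T} = x)), where P(X̂_1 = z̃, H_2) denotes the vector with entries P(X̂_1 = z̃, H_2 = h). -/
import Mathlib


noncomputable section

/-- Forward pass for a Markov chain with transition matrix `A`: `μ` is the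
joint vector at the first position and each entry of the list is the
evidence (emission likelihood) vector at the corresponding position. -/
def fwdVec {H : Type*} [Fintype H] (A : Matrix H H ℝ) :
    (H → ℝ) → List (H → ℝ) → (H → ℝ)
  | μ, [] => μ
  | μ, v :: vs => fwdVec A (A.mulVec fun h => μ h * v h) vs

/-- `hmmLik A W x h = P(X_{1:t} = x | H_0 = h)`. -/
def hmmLik {H X : Type*} [Fintype H] (A : Matrix H H ℝ)
    (W : X → H → ℝ) : List X → H → ℝ
  | [], _ => 1
  | z :: xs, h => ∑ h' : H, A h' h * W z h' * hmmLik A W xs h'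

/-- `phatH2 A μ W π x g = P(X̂_1 = z̃, H_2 = g, X̂_{3:T+2} = x)` for the
length-`(T+2)` modified sequence `X̂` induced by the prompt `π`: the hidden
chain is `H_1, …, H_{T+2}` with `P(H_1) = A μ`, the emission of the fake token
`z̃` at position 1 is `π`, position 2 is marginalized (indicator of `g`), and
positions `3, …, T+2` emit `x` with the original emissions `W`. -/
def phatH2 {H X : Type*} [Fintype H] [DecidableEq H] (A : Matrix H H ℝ)
    (μ : H → ℝ) (W : X → H → ℝ) (π : H → ℝ) {T : ℕ} (x : Fin T → X)
    (g : H) : ℝ :=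
  ∑ h, fwdVec A (A.mulVec μ)
    (π :: (fun g' => if g' = g then 1 else 0)
      :: List.ofFn fun k : Fin T => fun g' => W (x k) g') h

/-!
STATEMENT 4 (Lemma B.3 of the paper).

HMM with initial distribution `μ`, transitions `A`, emissions `W`; regularity
holds.  Fix a prompt `π ∈ [0,1]^{|H|}` and let `X̂` be the induced modified
sequence of length `T+2`.  Then there is an invertible diagonal matrix `D`
(encoded by a nowhere-zero diagonal `d`) such that for every `x ∈ X^T` with
`P(X̂_1 = z̃, X̂_{3:T+2} = x) > 0` there is a scalar `r_x > 0` with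
`P(H_2 | X̂_1 = z̃, X̂_{3:T+2} = x)
   = r_x · D · (P(X̂_1 = z̃, H_2) ⊙ P(H_0 | X_{1:T} = x))`,
where `P(X̂_1 = z̃, H_2 = g) = (A (π ⊙ (A μ))) g`.
-/
lemma fwd_sum {H X : Type*} [Fintype H] (A : Matrix H H ℝ) (W : X → H → ℝ)
    (hA1 : ∀ h, ∑ h', A h' h = 1) :
    ∀ (l : List X) (ν : H → ℝ),
      ∑ h, fwdVec A (A.mulVec ν) (l.map fun z g => W z g) h
        = ∑ g, ν g * hmmLik A W l g
  | [], ν => by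
      simp only [List.map_nil, fwdVec, hmmLik, Matrix.mulVec, dotProduct, mul_one]
      rw [Finset.sum_comm]
      simp [← Finset.sum_mul, mul_comm, hA1]
  | z :: xs, ν => by
      simp only [List.map_cons, fwdVec]
      rw [fwd_sum A W hA1 xs _]
      simp only [hmmLik, Matrix.mulVec, dotProduct, Finset.sum_mul, Finset.mul_sum]
      rw [Finset.sum_comm]
      apply Finset.sum_congr rfl
      intro g _
      apply Finset.sum_congr rfl
      intro h _
      ring

lemma hmmLik_nonneg {H X : Type*} [Fintype H] (A : Matrix H H ℝ) (W : X → H → ℝ)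
    (hA0 : ∀ h h', 0 ≤ A h' h) (hW0 : ∀ z h, 0 ≤ W z h) :
    ∀ (l : List X) (h : H), 0 ≤ hmmLik A W l h
  | [], h => by simp [hmmLik]
  | z :: xs, h => by
      simp only [hmmLik]
      exact Finset.sum_nonneg fun h' _ =>
        mul_nonneg (mul_nonneg (hA0 h h') (hW0 z h')) (hmmLik_nonneg A W hA0 hW0 xs h')

lemma phatH2_eq {H X : Type*} [Fintype H] [DecidableEq H] (A : Matrix H H ℝ)
    (μ : H → ℝ) (W : X → H → ℝ) (π : H → ℝ) {T : ℕ} (x : Fin T → X)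
    (hA1 : ∀ h, ∑ h', A h' h = 1) (g : H) :
    phatH2 A μ W π x g
      = (A.mulVec fun h => (A.mulVec μ) h * π h) g * hmmLik A W (List.ofFn x) g := by
  have hmap : (List.ofFn fun k : Fin T => fun g' => W (x k) g')
      = (List.ofFn x).map fun z g => W z g := by
    rw [List.map_ofFn]; rfl
  unfold phatH2
  simp only [fwdVec, hmap]
  rw [fwd_sum A W hA1]
  simp [mul_ite, ite_mul]

theorem stmt4 {H X : Type*} [Fintype H] [Fintype X] [DecidableEq H]
    (μ : H → ℝ) (A : Matrix H H ℝ) (W : X → H → ℝ)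
    (hμ0 : ∀ h, 0 ≤ μ h) (hμ1 : ∑ h, μ h = 1)
    (hA0 : ∀ h h', 0 ≤ A h' h) (hA1 : ∀ h, ∑ h', A h' h = 1)
    (hW0 : ∀ z h, 0 ≤ W z h) (hW1 : ∀ h, ∑ z, W z h = 1)
    -- regularity
    (hErg : ∃ n₀ : ℕ, ∀ n ≥ n₀, ∀ h h' : H, 0 < (A ^ n) h' h)
    (hfull : ∀ h, 0 < μ h)
    (π : H → ℝ) (hπ : ∀ h, 0 ≤ π h ∧ π h ≤ 1)
    (T : ℕ) :
    ∃ d : H → ℝ, (∀ g, d g ≠ 0) ∧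
      ∀ x : Fin T → X,
        0 < ∑ g, phatH2 A μ W π x g →
        ∃ r : ℝ, 0 < r ∧ ∀ g : H,
          phatH2 A μ W π x g / (∑ g', phatH2 A μ W π x g')
            = r * d g *
              ((A.mulVec fun h => (A.mulVec μ) h * π h) g *
                (μ g * hmmLik A W (List.ofFn x) g /
                  ∑ g', μ g' * hmmLik A W (List.ofFn x) g')) := by
  refine ⟨fun g => (μ g)⁻¹, fun g => inv_ne_zero (hfull g).ne', ?_⟩
  intro x hx
  set L : H → ℝ := hmmLik A W (List.ofFn x) with hL
  set q : H → ℝ := A.mulVec fun h => (A.mulVec μ) h * π h with hq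
  have hpe : ∀ g, phatH2 A μ W π x g = q g * L g := fun g => phatH2_eq A μ W π x hA1 g
  set S : ℝ := ∑ g, phatH2 A μ W π x g with hS
  set Z : ℝ := ∑ g', μ g' * L g' with hZ
  have hLnn : ∀ g, 0 ≤ L g := fun g => hmmLik_nonneg A W hA0 hW0 _ g
  -- some positive term
  obtain ⟨g₀, -, hg₀⟩ : ∃ g ∈ Finset.univ, 0 < phatH2 A μ W π x g := by
    by_contra hcon
    push_neg at hcon
    have : S ≤ 0 := Finset.sum_nonpos fun g hg => by
      rcases lt_or_ge 0 (phatH2 A μ W π x g) with h | h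
      · exact absurd h (hcon g hg).not_gt
      · exact h
    exact absurd hx this.not_gt
  have hLg₀ : 0 < L g₀ := by
    rcases (hLnn g₀).lt_or_eq with h | h
    · exact h
    · rw [hpe g₀, ← h, mul_zero] at hg₀; exact absurd hg₀ (lt_irrefl 0)
  have hZpos : 0 < Z := by
    rw [hZ]
    refine Finset.sum_pos' (fun g _ => mul_nonneg (hμ0 g) (hLnn g)) ⟨g₀, Finset.mem_univ g₀, ?_⟩
    exact mul_pos (hfull g₀) hLg₀
  refine ⟨Z / S, div_pos hZpos hx, ?_⟩
  intro g
  rw [hpe g]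
  have hSne : S ≠ 0 := hx.ne'
  have hZne : Z ≠ 0 := hZpos.ne'
  have hμne : μ g ≠ 0 := (hfull g).ne'
  field_simp


end
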